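/- For all integers k and l with l > k ≥ 3 and every real number t ≤ 0, one has p(t) > 0; consequently every real root of p is strictly positive. -/
import Mathlib


/-- Coefficient `c8` of the eliminant polynomial `p` in the variable `x3`. -/
def c8 (k l : ℝ) : ℝ :=
  4 * (2 * k + l - 1) * (2 * k ^ 2 + 2 * k * l + l * (l - 1))
    * (3 * k ^ 2 + 2 * k * l + l ^ 2 - 2 * k - l) ^ 2

/-- Coefficient `c7` of the eliminant polynomial `p`. -/
def c7 (k l : ℝ) : ℝ :=
  -16 * (2 * k + l - 2) * (3 * k ^ 2 + (2 * k + l) * (l - 1))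
    * (3 * k ^ 4 + (12 * l - 2) * k ^ 3 + (14 * l ^ 2 - 10 * l) * k ^ 2
      + (l ^ 2 * (8 * l - 10) + 2 * l) * k + 2 * l ^ 3 * (l - 2) + 2 * l ^ 2)

/-- Coefficient `c6` of the eliminant polynomial `p`. -/
def c6 (k l : ℝ) : ℝ :=
  160 * k ^ 7 + (1928 * l - 1000) * k ^ 6 + (5492 * l ^ 2 - 6764 * l + 1408) * k ^ 5
    + (7644 * l ^ 3 - 15830 * l ^ 2 + 7818 * l - 736) * k ^ 4
    + (6201 * l ^ 4 - 18266 * l ^ 3 + 15881 * l ^ 2 - 3848 * l + 128) * k ^ 3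
    + (3072 * l ^ 5 - 11752 * l ^ 4 + 14848 * l ^ 3 - 6912 * l ^ 2 + 808 * l) * k ^ 2
    + (880 * l ^ 6 - 4208 * l ^ 5 + 7012 * l ^ 4 - 4824 * l ^ 3 + 1204 * l ^ 2 - 64 * l) * k
    + 112 * l ^ 7 - 664 * l ^ 6 + 1432 * l ^ 5 - 1352 * l ^ 4 + 504 * l ^ 3 - 32 * l ^ 2

/-- Coefficient `c5` of the eliminant polynomial `p`. -/
def c5 (k l : ℝ) : ℝ :=
  -4 * (2 * k + l - 2) * ((128 * l - 108) * k ^ 5 + (582 * l ^ 2 - 725 * l + 144) * k ^ 4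
    + (921 * l ^ 3 - 1857 * l ^ 2 + 800 * l - 48) * k ^ 3
    + (736 * l ^ 4 - 2072 * l ^ 3 + 1600 * l ^ 2 - 324 * l) * k ^ 2
    + (312 * l ^ 5 - 1152 * l ^ 4 + 1292 * l ^ 3 - 484 * l ^ 2 + 48 * l) * k
    + 56 * l ^ 6 - 268 * l ^ 5 + 424 * l ^ 4 - 252 * l ^ 3 + 40 * l ^ 2)

/-- Coefficient `c4` of the eliminant polynomial `p`. -/
def c4 (k l : ℝ) : ℝ :=
  (200 * l - 320) * k ^ 6 + (2448 * l ^ 2 - 4584 * l + 1712) * k ^ 5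
    + (6812 * l ^ 3 - 18568 * l ^ 2 + 13190 * l - 2216) * k ^ 4
    + (8618 * l ^ 4 - 32023 * l ^ 3 + 36747 * l ^ 2 - 13648 * l + 1056) * k ^ 3
    + (5781 * l ^ 5 - 27998 * l ^ 4 + 45785 * l ^ 3 - 29060 * l ^ 2 + 6104 * l - 160) * k ^ 2
    + (2000 * l ^ 6 - 12260 * l ^ 5 + 27136 * l ^ 4 - 25936 * l ^ 3 + 9932 * l ^ 2
        - 1120 * l) * k
    + 280 * l ^ 7 - 2120 * l ^ 6 + 6124 * l ^ 5 - 8336 * l ^ 4 + 5284 * l ^ 3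
    - 1280 * l ^ 2 + 64 * l

/-- Coefficient `c3` of the eliminant polynomial `p`. -/
def c3 (k l : ℝ) : ℝ :=
  -2 * (l - 2) * (2 * k + l - 2) * ((128 * l - 108) * k ^ 4
    + (582 * l ^ 2 - 725 * l + 144) * k ^ 3
    + (842 * l ^ 3 - 1694 * l ^ 2 + 716 * l - 48) * k ^ 2
    + (512 * l ^ 4 - 1560 * l ^ 3 + 1232 * l ^ 2 - 244 * l) * k
    + 112 * l ^ 5 - 480 * l ^ 4 + 632 * l ^ 3 - 280 * l ^ 2 + 32 * l)

/-- Coefficient `c2` of the eliminant polynomial `p`. -/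
def c2 (k l : ℝ) : ℝ :=
  2 * (l - 2) ^ 2 * (20 * k ^ 5 + (241 * l - 125) * k ^ 4
    + (659 * l ^ 2 - 800 * l + 158) * k ^ 3
    + (703 * l ^ 3 - 1593 * l ^ 2 + 820 * l - 68) * k ^ 2
    + (328 * l ^ 4 - 1156 * l ^ 3 + 1168 * l ^ 2 - 336 * l + 8) * k
    + 56 * l ^ 5 - 276 * l ^ 4 + 448 * l ^ 3 - 268 * l ^ 2 + 48 * l)

/-- Coefficient `c1` of the eliminant polynomial `p`. -/
def c1 (k l : ℝ) : ℝ :=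
  -2 * (l - 2) ^ 3 * (2 * k + l - 2) * (3 * k + 2 * l - 2)
    * (3 * k ^ 2 + 2 * k * (6 * l - 1) + 4 * l * (2 * l - 1))

/-- Coefficient `c0` of the eliminant polynomial `p`. -/
def c0 (k l : ℝ) : ℝ :=
  (l - 2) ^ 4 * (k + l) * (3 * k + 2 * l - 2) ^ 2

/-- The degree-8 eliminant polynomial `p` in the variable `x3`, obtained via a Gröbner
basis computation with lexicographic order `z > x12 > x3`, whose roots give the
`x3`-values of non-naturally reductive Einstein metrics on `SO(2k+l)`. -/
def ppoly (k l t : ℝ) : ℝ :=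
  c8 k l * t ^ 8 + c7 k l * t ^ 7 + c6 k l * t ^ 6 + c5 k l * t ^ 5 + c4 k l * t ^ 4
    + c3 k l * t ^ 3 + c2 k l * t ^ 2 + c1 k l * t + c0 k l

lemma c8_sign {k l : ℝ} (hk : 3 ≤ k) (hl : k + 1 ≤ l) : 0 < c8 k l := by
  have ha : (0:ℝ) ≤ k - 3 := by linarith
  have hb : (0:ℝ) ≤ l - k - 1 := by linarith
  set a := k - 3 with hadef
  set b := l - k - 1 with hbdef
  have hkey : c8 k l = 6316056 + 5103324 * b + 1849752 * b ^ 2 + 387528 * b ^ 3 + 50560 * b ^ 4 + 4104 * b ^ 5 + 192 * b ^ 6 + 4 * b ^ 7 + 14164956 * a + 9766224 * a * b + 2937912 * a * b ^ 2 + 490448 * a * b ^ 3 + 47800 * a * b ^ 4 + 2576 * a * b ^ 5 + 60 * a * b ^ 6 + 13606704 * a ^ 2 + 7783128 * a ^ 2 * b + 1865536 * a ^ 2 * b ^ 2 + 232648 * a ^ 2 * b ^ 3 + 15056 * a ^ 2 * b ^ 4 + 404 * a ^ 2 * b ^ 5 + 7256952 * a ^ 3 + 3306288 * a ^ 3 *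 b + 591992 * a ^ 3 * b ^ 2 + 49024 * a ^ 3 * b ^ 3 + 1580 * a ^ 3 * b ^ 4 + 2320776 * a ^ 4 + 789596 * a ^ 4 * b + 93880 * a ^ 4 * b ^ 2 + 3872 * a ^ 4 * b ^ 3 + 445020 * a ^ 5 + 100512 * a ^ 5 * b + 5952 * a ^ 5 * b ^ 2 + 47376 * a ^ 6 + 5328 * a ^ 6 * b + 2160 * a ^ 7 := by
    simp only [c8, hadef, hbdef]; ring
  linarith [pow_nonneg hb 1, pow_nonneg hb 2, pow_nonneg hb 3, pow_nonneg hb 4, pow_nonneg hb 5, pow_nonneg hb 6, pow_nonneg hb 7, pow_nonneg ha 1, mul_nonneg (pow_nonneg ha 1) (pow_nonneg hb 1), mul_nonneg (pow_nonneg ha 1) (pow_nonneg hb 2), mul_nonneg (pow_nonneg ha 1) (pow_nonneg hb 3), mul_nonneg (pow_nonneg ha 1) (pow_nonneg hb 4), mul_nonneg (pow_nonneg ha 1) (pow_nonneg hb 5), mul_nonneg (pow_nonneg ha 1) (pow_nonneg hb 6), pow_nonneg ha 2, mul_nonneg (pow_nonneg ha 2) (pow_nonneg hb 1), mul_nonneg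 (pow_nonneg ha 2) (pow_nonneg hb 2), mul_nonneg (pow_nonneg ha 2) (pow_nonneg hb 3), mul_nonneg (pow_nonneg ha 2) (pow_nonneg hb 4), mul_nonneg (pow_nonneg ha 2) (pow_nonneg hb 5), pow_nonneg ha 3, mul_nonneg (pow_nonneg ha 3) (pow_nonneg hb 1), mul_nonneg (pow_nonneg ha 3) (pow_nonneg hb 2), mul_nonneg (pow_nonneg ha 3) (pow_nonneg hb 3), mul_nonneg (pow_nonneg ha 3) (pow_nonneg hb 4), pow_nonneg ha 4, mul_nonneg (pow_nonneg ha 4) (pow_nonneg hb 1), mul_nonneg (pow_nonneg ha 4) (pow_nonneg hb 2), mul_nonneg (pow_nonneg ha 4) (pow_nonneg hb 3), pow_nonneg ha 5, mul_nonneg (pow_nonneg ha 5) (pow_nonneg hb 1), mul_nonneg (pow_nonneg ha 5) (pow_nonneg hb 2), pow_nonneg ha 6, mul_nonneg (pow_nonneg ha 6) (pow_nonneg hb 1), pow_nonneg ha 7]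

lemma c7_sign {k l : ℝ} (hk : 3 ≤ k) (hl : k + 1 ≤ l) : c7 k l < 0 := by
  have ha : (0:ℝ) ≤ k - 3 := by linarith
  have hb : (0:ℝ) ≤ l - k - 1 := by linarith
  set a := k - 3 with hadef
  set b := l - k - 1 with hbdef
  have hkey : -(c7 k l) = 32897664 + 29826000 * b + 11811600 * b ^ 2 + 2655472 * b ^ 3 + 366560 * b ^ 4 + 31104 * b ^ 5 + 1504 * b ^ 6 + 32 * b ^ 7 + 74008944 * a + 57472032 * a * b + 18943440 * a * b ^ 2 + 3402336 * a * b ^ 3 + 351744 * a * b ^ 4 + 19872 * a * b ^ 5 + 480 * a * b ^ 6 + 71234640 * a ^ 2 + 46071296 * a ^ 2 * b + 12134016 * a ^ 2 * b ^ 2 + 1632160 * a ^ 2 * b ^ 3 + 112320 * a ^ 2 * b ^ 4 + 3168 * a ^ 2 * b ^ 5 + 38025984 * a ^ 3 + 19666528 * a ^ 3 * b + 3880288 * a ^ 3 * b ^ 2 + 347456 * a ^ 3 * b ^ 3 + 11936 * a ^ 3 * b ^ 4 + 12158048 * a ^ 4 + 4714896 * a ^ 4 * b + 619504 * a ^ 4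 * b ^ 2 + 27696 * a ^ 4 * b ^ 3 + 2328240 * a ^ 5 + 601920 * a ^ 5 * b + 39504 * a ^ 5 * b ^ 2 + 247248 * a ^ 6 + 31968 * a ^ 6 * b + 11232 * a ^ 7 := by
    simp only [c7, hadef, hbdef]; ring
  linarith [pow_nonneg hb 1, pow_nonneg hb 2, pow_nonneg hb 3, pow_nonneg hb 4, pow_nonneg hb 5, pow_nonneg hb 6, pow_nonneg hb 7, pow_nonneg ha 1, mul_nonneg (pow_nonneg ha 1) (pow_nonneg hb 1), mul_nonneg (pow_nonneg ha 1) (pow_nonneg hb 2), mul_nonneg (pow_nonneg ha 1) (pow_nonneg hb 3), mul_nonneg (pow_nonneg ha 1) (pow_nonneg hb 4), mul_nonneg (pow_nonneg ha 1) (pow_nonneg hb 5), mul_nonneg (pow_nonneg ha 1) (pow_nonneg hb 6), pow_nonneg ha 2, mul_nonneg (pow_nonneg ha 2) (pow_nonneg hb 1), mul_nonneg (pow_nonneg ha 2) (pow_nonneg hb 2), mul_nonneg (pow_nonneg ha 2) (pow_nonneg hb 3), mul_nonneg (pow_nonneg ha 2) (pow_nonneg hb 4), mul_nonneg (pow_nonneg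 ha 2) (pow_nonneg hb 5), pow_nonneg ha 3, mul_nonneg (pow_nonneg ha 3) (pow_nonneg hb 1), mul_nonneg (pow_nonneg ha 3) (pow_nonneg hb 2), mul_nonneg (pow_nonneg ha 3) (pow_nonneg hb 3), mul_nonneg (pow_nonneg ha 3) (pow_nonneg hb 4), pow_nonneg ha 4, mul_nonneg (pow_nonneg ha 4) (pow_nonneg hb 1), mul_nonneg (pow_nonneg ha 4) (pow_nonneg hb 2), mul_nonneg (pow_nonneg ha 4) (pow_nonneg hb 3), pow_nonneg ha 5, mul_nonneg (pow_nonneg ha 5) (pow_nonneg hb 1), mul_nonneg (pow_nonneg ha 5) (pow_nonneg hb 2), pow_nonneg ha 6, mul_nonneg (pow_nonneg ha 6) (pow_nonneg hb 1), pow_nonneg ha 7]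

lemma c6_sign {k l : ℝ} (hk : 3 ≤ k) (hl : k + 1 ≤ l) : 0 < c6 k l := by
  have ha : (0:ℝ) ≤ k - 3 := by linarith
  have hb : (0:ℝ) ≤ l - k - 1 := by linarith
  set a := k - 3 with hadef
  set b := l - k - 1 with hbdef
  have hkey : c6 k l = 71184672 + 72708486 * b + 31707293 * b ^ 2 + 7712894 * b ^ 3 + 1135583 * b ^ 4 + 101512 * b ^ 5 + 5112 * b ^ 6 + 112 * b ^ 7 + 161718486 * a + 141673718 * a * b + 51500981 * a * b ^ 2 + 10024038 * a * b ^ 3 + 1107167 * a * b ^ 4 + 66016 * a * b ^ 5 + 1664 * a * b ^ 6 + 157023457 * a ^ 2 + 114725956 * a ^ 2 * b + 33376965 * a ^ 2 * b ^ 2 + 4873210 * a ^ 2 * b ^ 3 + 358897 * a ^ 2 * b ^ 4 + 10704 * a ^ 2 * b ^ 5 + 84471037 * a ^ 3 + 49421716 * a ^ 3 * b + 10788789 * a ^ 3 * b ^ 2 + 1050346 * a ^ 3 * b ^ 3 + 38681 * a ^ 3 * b ^ 4 + 27190358 * a ^ 4 + 11945006 * a ^ 4 * b + 1739414 * a ^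 4 * b ^ 2 + 84688 * a ^ 4 * b ^ 3 + 5237052 * a ^ 5 + 1535846 * a ^ 5 * b + 111902 * a ^ 5 * b ^ 2 + 558857 * a ^ 6 + 82072 * a ^ 6 * b + 25489 * a ^ 7 := by
    simp only [c6, hadef, hbdef]; ring
  linarith [pow_nonneg hb 1, pow_nonneg hb 2, pow_nonneg hb 3, pow_nonneg hb 4, pow_nonneg hb 5, pow_nonneg hb 6, pow_nonneg hb 7, pow_nonneg ha 1, mul_nonneg (pow_nonneg ha 1) (pow_nonneg hb 1), mul_nonneg (pow_nonneg ha 1) (pow_nonneg hb 2), mul_nonneg (pow_nonneg ha 1) (pow_nonneg hb 3), mul_nonneg (pow_nonneg ha 1) (pow_nonneg hb 4), mul_nonneg (pow_nonneg ha 1) (pow_nonneg hb 5), mul_nonneg (pow_nonneg ha 1) (pow_nonneg hb 6), pow_nonneg ha 2, mul_nonneg (pow_nonneg ha 2) (pow_nonneg hb 1), mul_nonneg (pow_nonneg ha 2) (pow_nonneg hb 2), mul_nonneg (pow_nonneg ha 2) (pow_nonneg hb 3), mul_nonneg (pow_nonneg ha 2) (pow_nonneg hb 4), mul_nonneg (pow_nonneg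 ha 2) (pow_nonneg hb 5), pow_nonneg ha 3, mul_nonneg (pow_nonneg ha 3) (pow_nonneg hb 1), mul_nonneg (pow_nonneg ha 3) (pow_nonneg hb 2), mul_nonneg (pow_nonneg ha 3) (pow_nonneg hb 3), mul_nonneg (pow_nonneg ha 3) (pow_nonneg hb 4), pow_nonneg ha 4, mul_nonneg (pow_nonneg ha 4) (pow_nonneg hb 1), mul_nonneg (pow_nonneg ha 4) (pow_nonneg hb 2), mul_nonneg (pow_nonneg ha 4) (pow_nonneg hb 3), pow_nonneg ha 5, mul_nonneg (pow_nonneg ha 5) (pow_nonneg hb 1), mul_nonneg (pow_nonneg ha 5) (pow_nonneg hb 2), pow_nonneg ha 6, mul_nonneg (pow_nonneg ha 6) (pow_nonneg hb 1), pow_nonneg ha 7]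

lemma c5_sign {k l : ℝ} (hk : 3 ≤ k) (hl : k + 1 ≤ l) : c5 k l < 0 := by
  have ha : (0:ℝ) ≤ k - 3 := by linarith
  have hb : (0:ℝ) ≤ l - k - 1 := by linarith
  set a := k - 3 with hadef
  set b := l - k - 1 with hbdef
  have hkey : -(c5 k l) = 82295040 + 95479040 * b + 46344988 * b ^ 2 + 12329996 * b ^ 3 + 1956044 * b ^ 4 + 185952 * b ^ 5 + 9840 * b ^ 6 + 224 * b ^ 7 + 190498240 * a + 189269632 * a * b + 76547564 * a * b ^ 2 + 16297372 * a * b ^ 3 + 1940508 * a * b ^ 4 + 123136 * a * b ^ 5 + 3264 * a * b ^ 6 + 188245508 * a ^ 2 + 155766228 * a ^ 2 * b + 50401452 * a ^ 2 * b ^ 2 + 8051556 * a ^ 2 * b ^ 3 + 639636 * a ^ 2 * b ^ 4 + 20320 * a ^ 2 * b ^ 5 + 102943348 * a ^ 3 + 68124740 * a ^ 3 * b + 16536844 * a ^ 3 * b ^ 2 + 1762116 * a ^ 3 * b ^ 3 + 70052 * a ^ 3 * b ^ 4 + 33647656 * a ^ 4 + 16699740 * a ^ 4 * b + 2703752 *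 a ^ 4 * b ^ 2 + 144144 * a ^ 4 * b ^ 3 + 6573752 * a ^ 5 + 2175580 * a ^ 5 * b + 176232 * a ^ 5 * b ^ 2 + 710836 * a ^ 6 + 117680 * a ^ 6 * b + 32820 * a ^ 7 := by
    simp only [c5, hadef, hbdef]; ring
  linarith [pow_nonneg hb 1, pow_nonneg hb 2, pow_nonneg hb 3, pow_nonneg hb 4, pow_nonneg hb 5, pow_nonneg hb 6, pow_nonneg hb 7, pow_nonneg ha 1, mul_nonneg (pow_nonneg ha 1) (pow_nonneg hb 1), mul_nonneg (pow_nonneg ha 1) (pow_nonneg hb 2), mul_nonneg (pow_nonneg ha 1) (pow_nonneg hb 3), mul_nonneg (pow_nonneg ha 1) (pow_nonneg hb 4), mul_nonneg (pow_nonneg ha 1) (pow_nonneg hb 5), mul_nonneg (pow_nonneg ha 1) (pow_nonneg hb 6), pow_nonneg ha 2, mul_nonneg (pow_nonneg ha 2) (pow_nonneg hb 1), mul_nonneg (pow_nonneg ha 2) (pow_nonneg hb 2), mul_nonneg (pow_nonneg ha 2) (pow_nonneg hb 3), mul_nonneg (pow_nonneg ha 2) (pow_nonneg hb 4), mul_nonneg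 (pow_nonneg ha 2) (pow_nonneg hb 5), pow_nonneg ha 3, mul_nonneg (pow_nonneg ha 3) (pow_nonneg hb 1), mul_nonneg (pow_nonneg ha 3) (pow_nonneg hb 2), mul_nonneg (pow_nonneg ha 3) (pow_nonneg hb 3), mul_nonneg (pow_nonneg ha 3) (pow_nonneg hb 4), pow_nonneg ha 4, mul_nonneg (pow_nonneg ha 4) (pow_nonneg hb 1), mul_nonneg (pow_nonneg ha 4) (pow_nonneg hb 2), mul_nonneg (pow_nonneg ha 4) (pow_nonneg hb 3), pow_nonneg ha 5, mul_nonneg (pow_nonneg ha 5) (pow_nonneg hb 1), mul_nonneg (pow_nonneg ha 5) (pow_nonneg hb 2), pow_nonneg ha 6, mul_nonneg (pow_nonneg ha 6) (pow_nonneg hb 1), pow_nonneg ha 7]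

lemma c4_sign {k l : ℝ} (hk : 3 ≤ k) (hl : k + 1 ≤ l) : 0 < c4 k l := by
  have ha : (0:ℝ) ≤ k - 3 := by linarith
  have hb : (0:ℝ) ≤ l - k - 1 := by linarith
  set a := k - 3 with hadef
  set b := l - k - 1 with hbdef
  have hkey : c4 k l = 54604912 + 72855622 * b + 39931841 * b ^ 2 + 11781988 * b ^ 3 + 2039636 * b ^ 4 + 208573 * b ^ 5 + 11720 * b ^ 6 + 280 * b ^ 7 + 130334534 * a + 148156522 * a * b + 67446693 * a * b ^ 2 + 15895897 * a * b ^ 3 + 2063219 * a * b ^ 4 + 140746 * a * b ^ 5 + 3960 * a * b ^ 6 + 132585817 * a ^ 2 + 124936394 * a ^ 2 * b + 45372922 * a ^ 2 * b ^ 2 + 8010556 * a ^ 2 * b ^ 3 + 693114 * a ^ 2 * b ^ 4 + 23661 * a ^ 2 * b ^ 5 + 74524089 * a ^ 3 + 55923593 * a ^ 3 * b + 15196315 * a ^ 3 * b ^ 2 + 1787005 * a ^ 3 * b ^ 3 + 77323 * a ^ 3 * b ^ 4 + 24999316 * a ^ 4 + 14014595 * a ^ 4 * b + 2533887 * a ^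 4 * b ^ 2 + 148894 * a ^ 4 * b ^ 3 + 5005374 * a ^ 5 + 1864405 * a ^ 5 * b + 168282 * a ^ 5 * b ^ 2 + 553915 * a ^ 6 + 102869 * a ^ 6 * b + 26139 * a ^ 7 := by
    simp only [c4, hadef, hbdef]; ring
  linarith [pow_nonneg hb 1, pow_nonneg hb 2, pow_nonneg hb 3, pow_nonneg hb 4, pow_nonneg hb 5, pow_nonneg hb 6, pow_nonneg hb 7, pow_nonneg ha 1, mul_nonneg (pow_nonneg ha 1) (pow_nonneg hb 1), mul_nonneg (pow_nonneg ha 1) (pow_nonneg hb 2), mul_nonneg (pow_nonneg ha 1) (pow_nonneg hb 3), mul_nonneg (pow_nonneg ha 1) (pow_nonneg hb 4), mul_nonneg (pow_nonneg ha 1) (pow_nonneg hb 5), mul_nonneg (pow_nonneg ha 1) (pow_nonneg hb 6), pow_nonneg ha 2, mul_nonneg (pow_nonneg ha 2) (pow_nonneg hb 1), mul_nonneg (pow_nonneg ha 2) (pow_nonneg hb 2), mul_nonneg (pow_nonneg ha 2) (pow_nonneg hb 3), mul_nonneg (pow_nonneg ha 2) (pow_nonneg hb 4), mul_nonneg (pow_nonneg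 ha 2) (pow_nonneg hb 5), pow_nonneg ha 3, mul_nonneg (pow_nonneg ha 3) (pow_nonneg hb 1), mul_nonneg (pow_nonneg ha 3) (pow_nonneg hb 2), mul_nonneg (pow_nonneg ha 3) (pow_nonneg hb 3), mul_nonneg (pow_nonneg ha 3) (pow_nonneg hb 4), pow_nonneg ha 4, mul_nonneg (pow_nonneg ha 4) (pow_nonneg hb 1), mul_nonneg (pow_nonneg ha 4) (pow_nonneg hb 2), mul_nonneg (pow_nonneg ha 4) (pow_nonneg hb 3), pow_nonneg ha 5, mul_nonneg (pow_nonneg ha 5) (pow_nonneg hb 1), mul_nonneg (pow_nonneg ha 5) (pow_nonneg hb 2), pow_nonneg ha 6, mul_nonneg (pow_nonneg ha 6) (pow_nonneg hb 1), pow_nonneg ha 7]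

lemma c3_sign {k l : ℝ} (hk : 3 ≤ k) (hl : k + 1 ≤ l) : c3 k l < 0 := by
  have ha : (0:ℝ) ≤ k - 3 := by linarith
  have hb : (0:ℝ) ≤ l - k - 1 := by linarith
  set a := k - 3 with hadef
  set b := l - k - 1 with hbdef
  have hkey : -(c3 k l) = 20926208 + 32622720 * b + 20540388 * b ^ 2 + 6834562 * b ^ 3 + 1310992 * b ^ 4 + 146196 * b ^ 5 + 8832 * b ^ 6 + 224 * b ^ 7 + 52197056 * a + 68786592 * a * b + 35753206 * a * b ^ 2 + 9461074 * a * b ^ 3 + 1356472 * a * b ^ 4 + 100680 * a * b ^ 5 + 3040 * a * b ^ 6 + 55365340 * a ^ 2 + 60049806 * a ^ 2 * b + 24759950 * a ^ 2 * b ^ 2 + 4888398 * a ^ 2 * b ^ 3 + 465888 * a ^ 2 * b ^ 4 + 17268 * a ^ 2 * b ^ 5 + 32379450 * a ^ 3 + 27784318 * a ^ 3 * b + 8527762 * a ^ 3 * b ^ 2 + 1117294 * a ^ 3 * b ^ 3 + 53112 * a ^ 3 * b ^ 4 + 11278610 * a ^ 4 + 7186766 * a ^ 4 * b + 1460766 *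 a ^ 4 * b ^ 2 + 95312 * a ^ 4 * b ^ 3 + 2340358 * a ^ 5 + 985434 * a ^ 5 * b + 99560 * a ^ 5 * b ^ 2 + 267922 * a ^ 6 + 55964 * a ^ 6 * b + 13056 * a ^ 7 := by
    simp only [c3, hadef, hbdef]; ring
  linarith [pow_nonneg hb 1, pow_nonneg hb 2, pow_nonneg hb 3, pow_nonneg hb 4, pow_nonneg hb 5, pow_nonneg hb 6, pow_nonneg hb 7, pow_nonneg ha 1, mul_nonneg (pow_nonneg ha 1) (pow_nonneg hb 1), mul_nonneg (pow_nonneg ha 1) (pow_nonneg hb 2), mul_nonneg (pow_nonneg ha 1) (pow_nonneg hb 3), mul_nonneg (pow_nonneg ha 1) (pow_nonneg hb 4), mul_nonneg (pow_nonneg ha 1) (pow_nonneg hb 5), mul_nonneg (pow_nonneg ha 1) (pow_nonneg hb 6), pow_nonneg ha 2, mul_nonneg (pow_nonneg ha 2) (pow_nonneg hb 1), mul_nonneg (pow_nonneg ha 2) (pow_nonneg hb 2), mul_nonneg (pow_nonneg ha 2) (pow_nonneg hb 3), mul_nonneg (pow_nonneg ha 2) (pow_nonneg hb 4), mul_nonneg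 (pow_nonneg ha 2) (pow_nonneg hb 5), pow_nonneg ha 3, mul_nonneg (pow_nonneg ha 3) (pow_nonneg hb 1), mul_nonneg (pow_nonneg ha 3) (pow_nonneg hb 2), mul_nonneg (pow_nonneg ha 3) (pow_nonneg hb 3), mul_nonneg (pow_nonneg ha 3) (pow_nonneg hb 4), pow_nonneg ha 4, mul_nonneg (pow_nonneg ha 4) (pow_nonneg hb 1), mul_nonneg (pow_nonneg ha 4) (pow_nonneg hb 2), mul_nonneg (pow_nonneg ha 4) (pow_nonneg hb 3), pow_nonneg ha 5, mul_nonneg (pow_nonneg ha 5) (pow_nonneg hb 1), mul_nonneg (pow_nonneg ha 5) (pow_nonneg hb 2), pow_nonneg ha 6, mul_nonneg (pow_nonneg ha 6) (pow_nonneg hb 1), pow_nonneg ha 7]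

lemma c2_sign {k l : ℝ} (hk : 3 ≤ k) (hl : k + 1 ≤ l) : 0 < c2 k l := by
  have ha : (0:ℝ) ≤ k - 3 := by linarith
  have hb : (0:ℝ) ≤ l - k - 1 := by linarith
  set a := k - 3 with hadef
  set b := l - k - 1 with hbdef
  have hkey : c2 k l = 4584712 + 8341040 * b + 6103978 * b ^ 2 + 2329314 * b ^ 3 + 503752 * b ^ 4 + 62262 * b ^ 5 + 4104 * b ^ 6 + 112 * b ^ 7 + 12060224 * a + 18448580 * a * b + 11060258 * a * b ^ 2 + 3332928 * a * b ^ 3 + 535684 * a * b ^ 4 + 43868 * a * b ^ 5 + 1440 * a * b ^ 6 + 13472122 * a ^ 2 + 16860750 * a ^ 2 * b + 7961000 * a ^ 2 * b ^ 2 + 1778096 * a ^ 2 * b ^ 3 + 188952 * a ^ 2 * b ^ 4 + 7694 * a ^ 2 * b ^ 5 + 8284766 * a ^ 3 + 8152096 * a ^ 3 * b + 2845728 * a ^ 3 * b ^ 2 + 419208 * a ^ 3 * b ^ 3 + 22108 * a ^ 3 * b ^ 4 + 3029384 * a ^ 4 + 2199634 * a ^ 4 * b + 505238 * a ^ 4 *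 b ^ 2 + 36854 * a ^ 4 * b ^ 3 + 658740 * a ^ 5 + 314104 * a ^ 5 * b + 35646 * a ^ 5 * b ^ 2 + 78886 * a ^ 6 + 18548 * a ^ 6 * b + 4014 * a ^ 7 := by
    simp only [c2, hadef, hbdef]; ring
  linarith [pow_nonneg hb 1, pow_nonneg hb 2, pow_nonneg hb 3, pow_nonneg hb 4, pow_nonneg hb 5, pow_nonneg hb 6, pow_nonneg hb 7, pow_nonneg ha 1, mul_nonneg (pow_nonneg ha 1) (pow_nonneg hb 1), mul_nonneg (pow_nonneg ha 1) (pow_nonneg hb 2), mul_nonneg (pow_nonneg ha 1) (pow_nonneg hb 3), mul_nonneg (pow_nonneg ha 1) (pow_nonneg hb 4), mul_nonneg (pow_nonneg ha 1) (pow_nonneg hb 5), mul_nonneg (pow_nonneg ha 1) (pow_nonneg hb 6), pow_nonneg ha 2, mul_nonneg (pow_nonneg ha 2) (pow_nonneg hb 1), mul_nonneg (pow_nonneg ha 2) (pow_nonneg hb 2), mul_nonneg (pow_nonneg ha 2) (pow_nonneg hb 3), mul_nonneg (pow_nonneg ha 2) (pow_nonneg hb 4), mul_nonneg (pow_nonneg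 ha 2) (pow_nonneg hb 5), pow_nonneg ha 3, mul_nonneg (pow_nonneg ha 3) (pow_nonneg hb 1), mul_nonneg (pow_nonneg ha 3) (pow_nonneg hb 2), mul_nonneg (pow_nonneg ha 3) (pow_nonneg hb 3), mul_nonneg (pow_nonneg ha 3) (pow_nonneg hb 4), pow_nonneg ha 4, mul_nonneg (pow_nonneg ha 4) (pow_nonneg hb 1), mul_nonneg (pow_nonneg ha 4) (pow_nonneg hb 2), mul_nonneg (pow_nonneg ha 4) (pow_nonneg hb 3), pow_nonneg ha 5, mul_nonneg (pow_nonneg ha 5) (pow_nonneg hb 1), mul_nonneg (pow_nonneg ha 5) (pow_nonneg hb 2), pow_nonneg ha 6, mul_nonneg (pow_nonneg ha 6) (pow_nonneg hb 1), pow_nonneg ha 7]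

lemma c1_sign {k l : ℝ} (hk : 3 ≤ k) (hl : k + 1 ≤ l) : c1 k l < 0 := by
  have ha : (0:ℝ) ≤ k - 3 := by linarith
  have hb : (0:ℝ) ≤ l - k - 1 := by linarith
  set a := k - 3 with hadef
  set b := l - k - 1 with hbdef
  have hkey : -(c1 k l) = 531840 + 1119472 * b + 953288 * b ^ 2 + 422564 * b ^ 3 + 104910 * b ^ 4 + 14644 * b ^ 5 + 1072 * b ^ 6 + 32 * b ^ 7 + 1481680 * a + 2618640 * a * b + 1818140 * a * b ^ 2 + 631256 * a * b ^ 3 + 115482 * a * b ^ 4 + 10600 * a * b ^ 5 + 384 * a * b ^ 6 + 1753000 * a ^ 2 + 2528300 * a ^ 2 * b + 1374612 * a ^ 2 * b ^ 2 + 350936 * a ^ 2 * b ^ 3 + 42106 * a ^ 2 * b ^ 4 + 1908 * a ^ 2 * b ^ 5 + 1141460 * a ^ 3 + 1289688 * a ^ 3 * b + 515140 * a ^ 3 * b ^ 2 + 86072 * a ^ 3 * b ^ 3 + 5086 * a ^ 3 * b ^ 4 + 441710 * a ^ 4 + 366612 * a ^ 4 * b + 95716 * a ^ 4 * b ^ 2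 + 7860 * a ^ 4 * b ^ 3 + 101570 * a ^ 5 + 55072 * a ^ 5 * b + 7056 * a ^ 5 * b ^ 2 + 12850 * a ^ 6 + 3416 * a ^ 6 * b + 690 * a ^ 7 := by
    simp only [c1, hadef, hbdef]; ring
  linarith [pow_nonneg hb 1, pow_nonneg hb 2, pow_nonneg hb 3, pow_nonneg hb 4, pow_nonneg hb 5, pow_nonneg hb 6, pow_nonneg hb 7, pow_nonneg ha 1, mul_nonneg (pow_nonneg ha 1) (pow_nonneg hb 1), mul_nonneg (pow_nonneg ha 1) (pow_nonneg hb 2), mul_nonneg (pow_nonneg ha 1) (pow_nonneg hb 3), mul_nonneg (pow_nonneg ha 1) (pow_nonneg hb 4), mul_nonneg (pow_nonneg ha 1) (pow_nonneg hb 5), mul_nonneg (pow_nonneg ha 1) (pow_nonneg hb 6), pow_nonneg ha 2, mul_nonneg (pow_nonneg ha 2) (pow_nonneg hb 1), mul_nonneg (pow_nonneg ha 2) (pow_nonneg hb 2), mul_nonneg (pow_nonneg ha 2) (pow_nonneg hb 3), mul_nonneg (pow_nonneg ha 2) (pow_nonneg hb 4), mul_nonneg (pow_nonneg ha 2) (pow_nonneg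 hb 5), pow_nonneg ha 3, mul_nonneg (pow_nonneg ha 3) (pow_nonneg hb 1), mul_nonneg (pow_nonneg ha 3) (pow_nonneg hb 2), mul_nonneg (pow_nonneg ha 3) (pow_nonneg hb 3), mul_nonneg (pow_nonneg ha 3) (pow_nonneg hb 4), pow_nonneg ha 4, mul_nonneg (pow_nonneg ha 4) (pow_nonneg hb 1), mul_nonneg (pow_nonneg ha 4) (pow_nonneg hb 2), mul_nonneg (pow_nonneg ha 4) (pow_nonneg hb 3), pow_nonneg ha 5, mul_nonneg (pow_nonneg ha 5) (pow_nonneg hb 1), mul_nonneg (pow_nonneg ha 5) (pow_nonneg hb 2), pow_nonneg ha 6, mul_nonneg (pow_nonneg ha 6) (pow_nonneg hb 1), pow_nonneg ha 7]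

lemma c0_sign {k l : ℝ} (hk : 3 ≤ k) (hl : k + 1 ≤ l) : 0 < c0 k l := by
  have ha : (0:ℝ) ≤ k - 3 := by linarith
  have hb : (0:ℝ) ≤ l - k - 1 := by linarith
  set a := k - 3 with hadef
  set b := l - k - 1 with hbdef
  have hkey : c0 k l = 25200 + 60720 * b + 59848 * b ^ 2 + 30960 * b ^ 3 + 8975 * b ^ 4 + 1445 * b ^ 5 + 120 * b ^ 6 + 4 * b ^ 7 + 74400 * a + 150800 * a * b + 121144 * a * b ^ 2 + 48868 * a * b ^ 3 + 10336 * a * b ^ 4 + 1082 * a * b ^ 5 + 44 * a * b ^ 6 + 93400 * a ^ 2 + 154640 * a ^ 2 * b + 97098 * a ^ 2 * b ^ 2 + 28622 * a ^ 2 * b ^ 3 + 3931 * a ^ 2 * b ^ 4 + 201 * a ^ 2 * b ^ 5 + 64600 * a ^ 3 + 83780 * a ^ 3 * b + 38516 * a ^ 3 * b ^ 2 + 7376 * a ^ 3 * b ^ 3 + 494 * a ^ 3 * b ^ 4 + 26575 * a ^ 4 + 25285 * a ^ 4 * b + 7562 * a ^ 4 * b ^ 2 + 706 * a ^ 4 *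 b ^ 3 + 6500 * a ^ 5 + 4030 * a ^ 5 * b + 588 * a ^ 5 * b ^ 2 + 875 * a ^ 6 + 265 * a ^ 6 * b + 50 * a ^ 7 := by
    simp only [c0, hadef, hbdef]; ring
  linarith [pow_nonneg hb 1, pow_nonneg hb 2, pow_nonneg hb 3, pow_nonneg hb 4, pow_nonneg hb 5, pow_nonneg hb 6, pow_nonneg hb 7, pow_nonneg ha 1, mul_nonneg (pow_nonneg ha 1) (pow_nonneg hb 1), mul_nonneg (pow_nonneg ha 1) (pow_nonneg hb 2), mul_nonneg (pow_nonneg ha 1) (pow_nonneg hb 3), mul_nonneg (pow_nonneg ha 1) (pow_nonneg hb 4), mul_nonneg (pow_nonneg ha 1) (pow_nonneg hb 5), mul_nonneg (pow_nonneg ha 1) (pow_nonneg hb 6), pow_nonneg ha 2, mul_nonneg (pow_nonneg ha 2) (pow_nonneg hb 1), mul_nonneg (pow_nonneg ha 2) (pow_nonneg hb 2), mul_nonneg (pow_nonneg ha 2) (pow_nonneg hb 3), mul_nonneg (pow_nonneg ha 2) (pow_nonneg hb 4), mul_nonneg (pow_nonneg ha 2) (pow_nonneg hb 5), pow_nonneg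 ha 3, mul_nonneg (pow_nonneg ha 3) (pow_nonneg hb 1), mul_nonneg (pow_nonneg ha 3) (pow_nonneg hb 2), mul_nonneg (pow_nonneg ha 3) (pow_nonneg hb 3), mul_nonneg (pow_nonneg ha 3) (pow_nonneg hb 4), pow_nonneg ha 4, mul_nonneg (pow_nonneg ha 4) (pow_nonneg hb 1), mul_nonneg (pow_nonneg ha 4) (pow_nonneg hb 2), mul_nonneg (pow_nonneg ha 4) (pow_nonneg hb 3), pow_nonneg ha 5, mul_nonneg (pow_nonneg ha 5) (pow_nonneg hb 1), mul_nonneg (pow_nonneg ha 5) (pow_nonneg hb 2), pow_nonneg ha 6, mul_nonneg (pow_nonneg ha 6) (pow_nonneg hb 1), pow_nonneg ha 7]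

/-- for integers `l > k ≥ 3`, `p(t) > 0` for every `t ≤ 0`; consequently
every real root of `p` is strictly positive. -/
theorem ppoly_pos_on_nonpos (k l : ℤ) (hk : 3 ≤ k) (hkl : k < l) :
    (∀ t : ℝ, t ≤ 0 → 0 < ppoly (k : ℝ) (l : ℝ) t) ∧
      ∀ t : ℝ, ppoly (k : ℝ) (l : ℝ) t = 0 → 0 < t := by
  have hk' : (3:ℝ) ≤ (k:ℝ) := by exact_mod_cast hk
  have hl' : (k:ℝ) + 1 ≤ (l:ℝ) := by exact_mod_cast hkl
  have main : ∀ t : ℝ, t ≤ 0 → 0 < ppoly (k : ℝ) (l : ℝ) t := by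
    intro t ht
    have h8 : 0 ≤ c8 (k:ℝ) (l:ℝ) * t ^ 8 :=
      mul_nonneg (c8_sign hk' hl').le (by positivity)
    have h7 : 0 ≤ c7 (k:ℝ) (l:ℝ) * t ^ 7 :=
      by
      have h := mul_nonneg (neg_nonneg.2 (c7_sign hk' hl').le)
        (neg_nonneg.2 (Odd.pow_nonpos (by decide : Odd 7) ht))
      rwa [neg_mul_neg] at h
    have h6 : 0 ≤ c6 (k:ℝ) (l:ℝ) * t ^ 6 :=
      mul_nonneg (c6_sign hk' hl').le (by positivity)
    have h5 : 0 ≤ c5 (k:ℝ) (l:ℝ) * t ^ 5 :=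
      by
      have h := mul_nonneg (neg_nonneg.2 (c5_sign hk' hl').le)
        (neg_nonneg.2 (Odd.pow_nonpos (by decide : Odd 5) ht))
      rwa [neg_mul_neg] at h
    have h4 : 0 ≤ c4 (k:ℝ) (l:ℝ) * t ^ 4 :=
      mul_nonneg (c4_sign hk' hl').le (by positivity)
    have h3 : 0 ≤ c3 (k:ℝ) (l:ℝ) * t ^ 3 :=
      by
      have h := mul_nonneg (neg_nonneg.2 (c3_sign hk' hl').le)
        (neg_nonneg.2 (Odd.pow_nonpos (by decide : Odd 3) ht))
      rwa [neg_mul_neg] at h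
    have h2 : 0 ≤ c2 (k:ℝ) (l:ℝ) * t ^ 2 :=
      mul_nonneg (c2_sign hk' hl').le (by positivity)
    have h1 : 0 ≤ c1 (k:ℝ) (l:ℝ) * t :=
      by
      have h := mul_nonneg (neg_nonneg.2 (c1_sign hk' hl').le) (neg_nonneg.2 ht)
      rwa [neg_mul_neg] at h
    have h0 : 0 < c0 (k:ℝ) (l:ℝ) := c0_sign hk' hl'
    unfold ppoly
    linarith
  refine ⟨main, fun t hroot => ?_⟩
  by_contra hle
  push_neg at hle
  exact absurd hroot (ne_of_gt (main t hle))
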